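/- A binary word w of length 2k+1 with k+1 zeros and k ones, interpreted as steps +1 for each 0 and -1 for each 1, is a Dyck-type path (all partial sums of proper prefixes positive and total sum 1) if and only if w arises as μ(A,B) for compositions A of k+1 (first part ≥ 2) and B of k with equal length and all partial sums Σ_{j=1}^m (a_j - b_j) positive. -/

import Mathlib

/-- A composition of `n` into `i` parts. -/
def IsComposition (n i : ℕ) (l : List ℕ) : Prop :=
  l.length = i ∧ l.sum = n ∧ ∀ x ∈ l, 0 < x

/-- The zippered binary word `μ(A,B)`. -/
def zipper (A B : List ℕ) : List ℕ :=
  (A.zip B).flatMap fun p => List.replicate p.1 0 ++ List.replicate p.2 1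

namespace DyckZipperAux

def zipP (P : List (ℕ × ℕ)) : List ℕ :=
  P.flatMap fun p => List.replicate p.1 0 ++ List.replicate p.2 1

lemma zipP_cons (a b : ℕ) (P : List (ℕ × ℕ)) :
    zipP ((a, b) :: P) = List.replicate a 0 ++ (List.replicate b 1 ++ zipP P) := by
  simp [zipP, List.append_assoc]

lemma zipP_append (P Q : List (ℕ × ℕ)) : zipP (P ++ Q) = zipP P ++ zipP Q :=
  List.flatMap_append

lemma count0_zipP (P : List (ℕ × ℕ)) : (zipP P).count 0 = (P.map Prod.fst).sum := by
  induction P with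
  | nil => simp [zipP]
  | cons p t ih =>
    obtain ⟨a, b⟩ := p
    simp [zipP_cons, List.count_append, List.count_replicate, ih]

lemma count1_zipP (P : List (ℕ × ℕ)) : (zipP P).count 1 = (P.map Prod.snd).sum := by
  induction P with
  | nil => simp [zipP]
  | cons p t ih =>
    obtain ⟨a, b⟩ := p
    simp [zipP_cons, List.count_append, List.count_replicate, ih]

lemma zipP_ne_nil (Q : List (ℕ × ℕ)) (h : Q ≠ []) (hpos : ∀ p ∈ Q, 0 < p.1) :
    zipP Q ≠ [] := by
  cases Q with
  | nil => exact absurd rfl h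
  | cons p t =>
    obtain ⟨a, b⟩ := p
    have ha : 0 < a := hpos (a, b) (List.mem_cons_self)
    rw [zipP_cons]
    intro hcontra
    have := congrArg List.length hcontra
    simp at this
    omega

lemma headI_eq_head' (l : List ℕ) (h : l ≠ []) : l.headI = l.head h := by
  cases l with
  | nil => exact absurd rfl h
  | cons a t => rfl

lemma length_le_sum (l : List ℕ) (h : ∀ x ∈ l, 0 < x) : l.length ≤ l.sum := by
  induction l with
  | nil => simp
  | cons a t ih =>
    simp only [List.length_cons, List.sum_cons]
    have := h a (by simp)
    have := ih (fun x hx => h x (by simp [hx]))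
    omega

/-- Core lemma for the ⟸ direction, with a surplus `d`. -/
lemma prefix_of_partial : ∀ (P : List (ℕ × ℕ)) (d : ℕ),
    (∀ p ∈ P, 0 < p.1 ∧ 0 < p.2) → (0 < d ∨ P ≠ []) →
    (∀ m, 1 ≤ m → m ≤ P.length →
      ((P.take m).map Prod.snd).sum < d + ((P.take m).map Prod.fst).sum) →
    ∀ ℓ, 1 ≤ ℓ → ((zipP P).take ℓ).count 1 < d + ((zipP P).take ℓ).count 0 := by
  intro P
  induction P with
  | nil =>
    intro d _ hne _ ℓ hℓ
    have hd : 0 < d := by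
      rcases hne with h | h
      · exact h
      · exact absurd rfl h
    simp [zipP]
    omega
  | cons p t ih =>
    obtain ⟨a, b⟩ := p
    intro d hpos hne hcond ℓ hℓ
    have ha : 0 < a := (hpos (a, b) (List.mem_cons_self)).1
    have hb : 0 < b := (hpos (a, b) (List.mem_cons_self)).2
    have hab : b < d + a := by
      have := hcond 1 le_rfl (by simp)
      simpa using this
    have key : ∀ c : ℕ, ((zipP ((a, b) :: t)).take ℓ).count c =
        ((List.replicate a (0 : ℕ)).take ℓ).count c +
        (((List.replicate b (1 : ℕ)).take (ℓ - a)).count c +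
         ((zipP t).take (ℓ - a - b)).count c) := by
      intro c
      rw [zipP_cons, List.take_append, List.take_append,
        List.count_append, List.count_append]
      simp [Nat.sub_sub]
    rw [key 1, key 0]
    have c10 : ((List.replicate a (0 : ℕ)).take ℓ).count 1 = 0 := by
      simp [List.take_replicate, List.count_replicate]
    have c00 : ((List.replicate a (0 : ℕ)).take ℓ).count 0 = min ℓ a := by
      simp [List.take_replicate, List.count_replicate]
    have c11 : ((List.replicate b (1 : ℕ)).take (ℓ - a)).count 1 = min (ℓ - a) b := by
      simp [List.take_replicate, List.count_replicate]
    have c01 : ((List.replicate b (1 : ℕ)).take (ℓ - a)).count 0 = 0 := by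
      simp [List.take_replicate, List.count_replicate]
    rw [c10, c00, c11, c01]
    by_cases hle : ℓ ≤ a + b
    · have ht0 : ℓ - a - b = 0 := by omega
      rw [ht0]
      simp only [List.take_zero, List.count_nil]
      rcases Nat.le_total ℓ a with h | h
      · have : ℓ - a = 0 := by omega
        rw [this]
        simp only [Nat.zero_min]
        omega
      · have h1 : min ℓ a = a := by omega
        have h2 : min (ℓ - a) b = ℓ - a := by omega
        rw [h1, h2]
        omega
    · have h1 : min ℓ a = a := by omega
      have h2 : min (ℓ - a) b = b := by omega
      rw [h1, h2]
      have hrec := ih (d + a - b)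
        (fun p hp => hpos p (by simp [hp]))
        (Or.inl (by omega))
        (by
          intro m hm1 hm2
          have h2c := hcond (m + 1) (by omega) (by simp; omega)
          simp only [List.take_succ_cons, List.map_cons, List.sum_cons] at h2c
          omega)
        (ℓ - a - b) (by omega)
      omega

/-- Core lemma for the ⟹ direction: breakpoint inequalities. -/
lemma partial_of_prefix (P : List (ℕ × ℕ)) (hpos : ∀ p ∈ P, 0 < p.1 ∧ 0 < p.2)
    (hpref : ∀ ℓ, 1 ≤ ℓ → ℓ < (zipP P).length →
      ((zipP P).take ℓ).count 1 < ((zipP P).take ℓ).count 0)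
    (htot : (P.map Prod.snd).sum < (P.map Prod.fst).sum) :
    ∀ m, 1 ≤ m → m ≤ P.length →
      ((P.take m).map Prod.snd).sum < ((P.take m).map Prod.fst).sum := by
  intro m hm1 hm2
  rcases eq_or_lt_of_le hm2 with he | hlt
  · rw [he, List.take_length]
    exact htot
  · have hz : zipP P = zipP (P.take m) ++ zipP (P.drop m) := by
      rw [← zipP_append, List.take_append_drop]
    set ℓ := (zipP (P.take m)).length with hℓdef
    have htake : (zipP P).take ℓ = zipP (P.take m) := by
      rw [hz]; exact List.take_left
    have hQne : P.take m ≠ [] := by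
      intro h
      have h2 : (P.take m).length = 0 := by rw [h]; rfl
      rw [List.length_take] at h2
      omega
    have hRne : P.drop m ≠ [] := by
      intro h
      have h2 : (P.drop m).length = 0 := by rw [h]; rfl
      rw [List.length_drop] at h2
      omega
    have hℓ1 : 1 ≤ ℓ :=
      List.length_pos_of_ne_nil (zipP_ne_nil (P.take m) hQne
        (fun p hp => (hpos p (List.take_subset m P hp)).1))
    have hℓ2 : ℓ < (zipP P).length := by
      have hR := List.length_pos_of_ne_nil (zipP_ne_nil (P.drop m) hRne
        (fun p hp => (hpos p (List.drop_subset m P hp)).1))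
      have hle : (zipP P).length = ℓ + (zipP (P.drop m)).length := by
        rw [hz]; simp [hℓdef]
      omega
    have := hpref ℓ hℓ1 hℓ2
    rw [htake, count0_zipP, count1_zipP] at this
    exact this

/-- Run decomposition: any nonempty binary word starting with 0 and ending with 1
is a zippered word. -/
lemma exists_decomp : ∀ (n : ℕ) (w : List ℕ), w.length ≤ n →
    (∀ x ∈ w, x = 0 ∨ x = 1) → w ≠ [] → w.headI = 0 → w.getLast? = some 1 →
    ∃ P : List (ℕ × ℕ), P ≠ [] ∧ (∀ p ∈ P, 0 < p.1 ∧ 0 < p.2) ∧ w = zipP P := by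
  intro n
  induction n with
  | zero =>
    intro w hw _ hne _ _
    cases w with
    | nil => exact absurd rfl hne
    | cons x xs => simp at hw
  | succ n ih =>
    intro w hlen hbin hne hhead hlast
    set t := w.takeWhile (fun x => x == 0) with ht
    set r := w.dropWhile (fun x => x == 0) with hr
    have hw : t ++ r = w := List.takeWhile_append_dropWhile
    have htrep : t = List.replicate t.length 0 := by
      rw [List.eq_replicate_iff]
      exact ⟨rfl, fun b hb => by simpa using List.mem_takeWhile_imp hb⟩
    have htpos : 0 < t.length := by
      cases w with
      | nil => exact absurd rfl hne
      | cons x xs =>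
        have hx : x = 0 := by simpa using hhead
        subst hx
        rw [ht]
        rw [List.takeWhile_cons_of_pos (by simp)]
        simp
    have hrne : r ≠ [] := by
      intro h
      have hwt : w = t := by rw [← hw, h, List.append_nil]
      have h1w : (1 : ℕ) ∈ w := by
        obtain ⟨hne', h2⟩ := List.mem_getLast?_eq_getLast (l := w) (x := 1) hlast
        rw [h2]
        exact List.getLast_mem hne'
      rw [hwt, htrep] at h1w
      have := List.eq_of_mem_replicate h1w
      simp at this
    have hrhead : r.headI = 1 := by
      have hh : (r.head hrne == 0) = false :=
        List.head_dropWhile_not (fun x => x == 0) hrne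
      rw [← headI_eq_head' r hrne] at hh
      have hmem : r.headI ∈ w := by
        rw [← hw, headI_eq_head' r hrne]
        exact List.mem_append_right _ (List.head_mem hrne)
      rcases hbin _ hmem with h0 | h1
      · rw [h0] at hh; simp at hh
      · exact h1
    set s := r.takeWhile (fun x => x == 1) with hs
    set u := r.dropWhile (fun x => x == 1) with hu
    have hruw : s ++ u = r := List.takeWhile_append_dropWhile
    have hsrep : s = List.replicate s.length 1 := by
      rw [List.eq_replicate_iff]
      exact ⟨rfl, fun b hb => by simpa using List.mem_takeWhile_imp hb⟩
    have hspos : 0 < s.length := by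
      obtain ⟨x, xs, hx⟩ := List.exists_cons_of_ne_nil hrne
      have hx1 : x = 1 := by
        rw [hx] at hrhead
        simpa using hrhead
      rw [hs, hx, hx1, List.takeWhile_cons_of_pos (by simp)]
      simp
    have e1 : t.length + r.length = w.length := by
      rw [← hw]; simp
    have e2 : s.length + u.length = r.length := by
      rw [← hruw]; simp
    by_cases hune : u = []
    · refine ⟨[(t.length, s.length)], by simp, by simp [htpos, hspos], ?_⟩
      rw [← hw, ← hruw, hune, List.append_nil]
      rw [zipP_cons]
      simp [zipP, ← htrep, ← hsrep]
    · have hulen : u.length ≤ n := by omega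
      have hubin : ∀ x ∈ u, x = 0 ∨ x = 1 := by
        intro x hx
        apply hbin
        rw [← hw, ← hruw]
        exact List.mem_append_right _ (List.mem_append_right _ hx)
      have huhead : u.headI = 0 := by
        have hh : (u.head hune == 1) = false :=
          List.head_dropWhile_not (fun x => x == 1) hune
        rw [← headI_eq_head' u hune] at hh
        have hmem : u.headI ∈ u := by
          rw [headI_eq_head' u hune]
          exact List.head_mem hune
        rcases hubin _ hmem with h0 | h1
        · exact h0
        · rw [h1] at hh; simp at hh
      have hulast : u.getLast? = some 1 := by
        have : w = (t ++ s) ++ u := by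
          rw [← hw, ← hruw, List.append_assoc]
        rw [this, List.getLast?_append] at hlast
        obtain ⟨y, ys, hyu⟩ := List.exists_cons_of_ne_nil hune
        have : u.getLast? = some (u.getLast hune) := List.getLast?_eq_getLast _
        rw [this] at hlast ⊢
        simpa using hlast
      obtain ⟨P', hP'ne, hP'pos, hP'w⟩ := ih u hulen hubin hune huhead hulast
      refine ⟨(t.length, s.length) :: P', by simp, ?_, ?_⟩
      · intro p hp
        rcases List.mem_cons.mp hp with h | h
        · rw [h]; exact ⟨htpos, hspos⟩
        · exact hP'pos p h
      · rw [zipP_cons, ← hP'w, ← hw, ← hruw, ← htrep, ← hsrep]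

end DyckZipperAux

open DyckZipperAux in
theorem dyck_path_iff_zipper (k : ℕ) (hk : 0 < k) (w : List ℕ)
    (hbin : ∀ x ∈ w, x = 0 ∨ x = 1)
    (hlen : w.length = 2 * k + 1)
    (h0 : w.count 0 = k + 1) (h1 : w.count 1 = k) :
    (∀ ℓ, 1 ≤ ℓ → ℓ < 2 * k + 1 →
        ((w.take ℓ).count 1 : ℤ) < (w.take ℓ).count 0) ↔
    (∃ i A B, 1 ≤ i ∧ i ≤ k ∧ IsComposition (k + 1) i A ∧ 2 ≤ A.headI ∧
        IsComposition k i B ∧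
        (∀ m, 1 ≤ m → m ≤ i → (B.take m).sum < (A.take m).sum) ∧
        w = zipper A B) := by
  have hwne : w ≠ [] := by
    intro h; rw [h] at hlen; simp at hlen
  constructor
  · intro h
    have hN : ∀ ℓ, 1 ≤ ℓ → ℓ < 2 * k + 1 →
        (w.take ℓ).count 1 < (w.take ℓ).count 0 := by
      intro ℓ h1 h2
      exact_mod_cast h ℓ h1 h2
    -- head is 0
    have hhead : w.headI = 0 := by
      obtain ⟨x, xs, hx⟩ := List.exists_cons_of_ne_nil hwne
      have := hN 1 le_rfl (by omega)
      rw [hx] at this ⊢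
      rcases hbin x (by rw [hx]; simp) with h0' | h1'
      · simpa using h0'
      · rw [h1'] at this
        simp at this
    -- last is 1
    have hlast : w.getLast? = some 1 := by
      have hgl : w.getLast hwne ∈ w := List.getLast_mem hwne
      have hdlast : w = w.dropLast ++ [w.getLast hwne] := by
        rw [List.dropLast_append_getLast]
      have hdl : w.dropLast = w.take (2 * k) := by
        rw [List.dropLast_eq_take, hlen]
        simp
      rcases hbin _ hgl with h0' | h1'
      · exfalso
        have hc0 : w.count 0 = (w.take (2 * k)).count 0 + 1 := by
          conv_lhs => rw [hdlast]
          rw [List.count_append, hdl, h0']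
          simp
        have hc1 : w.count 1 = (w.take (2 * k)).count 1 := by
          conv_lhs => rw [hdlast]
          rw [List.count_append, hdl, h0']
          simp
        have := hN (2 * k) (by omega) (by omega)
        omega
      · rw [List.getLast?_eq_getLast hwne, h1']
    obtain ⟨P, hPne, hPpos, hwP⟩ := exists_decomp w.length w le_rfl hbin hwne hhead hlast
    have hA0 : (P.map Prod.fst).sum = k + 1 := by
      rw [← count0_zipP, ← hwP, h0]
    have hB1 : (P.map Prod.snd).sum = k := by
      rw [← count1_zipP, ← hwP, h1]
    have hPlen : 1 ≤ P.length := by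
      cases P with
      | nil => exact absurd rfl hPne
      | cons p t => simp
    have hpartial := partial_of_prefix P hPpos
      (by
        intro ℓ hℓ1 hℓ2
        rw [← hwP] at hℓ2 ⊢
        rw [hlen] at hℓ2
        exact hN ℓ hℓ1 hℓ2)
      (by rw [hA0, hB1]; omega)
    refine ⟨P.length, P.map Prod.fst, P.map Prod.snd, hPlen, ?_, ?_, ?_, ?_, ?_, ?_⟩
    · -- i ≤ k
      have := length_le_sum (P.map Prod.snd)
        (by
          intro x hx
          obtain ⟨p, hp, hpx⟩ := List.mem_map.mp hx
          rw [← hpx]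
          exact (hPpos p hp).2)
      rw [hB1] at this
      simpa using this
    · exact ⟨by simp, hA0, by
        intro x hx
        obtain ⟨p, hp, hpx⟩ := List.mem_map.mp hx
        rw [← hpx]; exact (hPpos p hp).1⟩
    · -- 2 ≤ headI
      cases P with
      | nil => exact absurd rfl hPne
      | cons p t =>
        have hm := hpartial 1 le_rfl (by simp)
        simp only [List.take_succ_cons, List.take_zero, List.map_cons, List.map_nil,
          List.sum_cons, List.sum_nil] at hm
        have := (hPpos p (by simp)).2
        simp only [List.map_cons, List.headI_cons]
        omega
    · exact ⟨by simp, hB1, by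
        intro x hx
        obtain ⟨p, hp, hpx⟩ := List.mem_map.mp hx
        rw [← hpx]; exact (hPpos p hp).2⟩
    · intro m hm1 hm2
      have := hpartial m hm1 (by simpa using hm2)
      rw [List.map_take, List.map_take] at this
      exact this
    · rw [hwP]
      show zipP P = zipper (P.map Prod.fst) (P.map Prod.snd)
      unfold zipper
      congr 1
      simp only [List.zip_map', Prod.mk.eta, List.map_id_fun', id_eq]
  · rintro ⟨i, A, B, hi1, hik, ⟨hAl, hAs, hApos⟩, hA2, ⟨hBl, hBs, hBpos⟩, hps, hwAB⟩
    intro ℓ hℓ _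
    set P := A.zip B with hP
    have hwP : w = zipP P := hwAB
    have hPlen : P.length = i := by
      rw [hP, List.length_zip, hAl, hBl, min_self]
    have hmf : P.map Prod.fst = A := List.map_fst_zip (l₁ := A) (l₂ := B) (by rw [hAl, hBl])
    have hms : P.map Prod.snd = B := List.map_snd_zip (l₁ := A) (l₂ := B) (by rw [hAl, hBl])
    have key := prefix_of_partial P 0
      (by
        intro p hp
        obtain ⟨ha, hb⟩ := List.of_mem_zip (a := p.1) (b := p.2) hp
        exact ⟨hApos _ ha, hBpos _ hb⟩)
      (Or.inr (by
        intro h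
        have := congrArg List.length h
        rw [hPlen] at this
        simp at this
        omega))
      (by
        intro m hm1 hm2
        rw [List.map_take, List.map_take, hmf, hms]
        have := hps m hm1 (by omega)
        omega)
      ℓ hℓ
    rw [hwP]
    have key' : ((zipP P).take ℓ).count 1 < ((zipP P).take ℓ).count 0 := by omega
    exact_mod_cast key'
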